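/- arXiv:1806.05123 — 13 statements merged into one kernel-verified Lean document; each statement's English description precedes it below -/
import Mathlib

section
/- Let H be a real inner product space, f : H → ℝ, x ∈ H, d ∈ H with d ≠ 0, and let g ≥ 0, M > 0, γ_max > 0 be real numbers. Set γ := min{g/(M‖d‖²), γ_max}. If the sufficient decrease condition f(x + γ·d) ≤ f(x) − γ·g + (γ²·M/2)·‖d‖² holds, then for every ξ ∈ [0, γ_max] one has f(x + γ·d) ≤ f(x) − ξ·g + (ξ²·M/2)·‖d‖². -/
open scoped RealInnerProductSpace

/-- If the sufficient decrease condition holds at the accepted step-size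
`γ = min{g/(M‖d‖²), γ_max}`, then the surrogate bound holds for every `ξ ∈ [0, γ_max]`. -/
theorem stmt_1 {H : Type*} [NormedAddCommGroup H] [InnerProductSpace ℝ H]
    (f : H → ℝ) (x d : H) (hd : d ≠ 0) (g M γmax : ℝ) (hg : 0 ≤ g) (hM : 0 < M)
    (hγmax : 0 < γmax) (γ : ℝ) (hγ : γ = min (g / (M * ‖d‖ ^ 2)) γmax)
    (hsd : f (x + γ • d) ≤ f x - γ * g + γ ^ 2 * M / 2 * ‖d‖ ^ 2) :
    ∀ ξ ∈ Set.Icc (0 : ℝ) γmax,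
      f (x + γ • d) ≤ f x - ξ * g + ξ ^ 2 * M / 2 * ‖d‖ ^ 2 := by
  intro ξ hξ
  obtain ⟨hξ0, hξmax⟩ := hξ
  have hdn : 0 < ‖d‖ := norm_pos_iff.mpr hd
  have hA : 0 < M * ‖d‖ ^ 2 := by positivity
  set A := M * ‖d‖ ^ 2 with hAdef
  set c := g / A with hcdef
  have hcA : c * A = g := div_mul_cancel₀ g (ne_of_gt hA)
  have hc0 : 0 ≤ c := div_nonneg hg hA.le
  -- it suffices to show q(γ) ≤ q(ξ)
  have key : -γ * g + γ ^ 2 * A / 2 ≤ -ξ * g + ξ ^ 2 * A / 2 := by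
    rcases le_total c γmax with h | h
    · have hγc : γ = c := by rw [hγ]; exact min_eq_left h
      rw [hγc]
      nlinarith [mul_nonneg (sq_nonneg (ξ - c)) hA.le, hcA]
    · have hγc : γ = γmax := by rw [hγ]; exact min_eq_right h
      have h1 : 0 ≤ γmax - ξ := by linarith
      have h2 : 0 ≤ c - γmax := by linarith
      rw [hγc]
      nlinarith [mul_nonneg (mul_nonneg h1 h2) hA.le,
        mul_nonneg (mul_nonneg h1 h1) hA.le, hcA]
  have : f x - γ * g + γ ^ 2 * M / 2 * ‖d‖ ^ 2 ≤ f x - ξ * g + ξ ^ 2 * M / 2 * ‖d‖ ^ 2 := by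
    nlinarith [key]
  linarith
end

section
/- Let τ > 1, 0 < η ≤ 1, L > 0 and L_{−1} > 0 be real numbers. Let (L_i)_{i ≥ −1} be a sequence of positive reals and (n_i)_{i ≥ 0} a sequence of positive integers such that L_i = η·L_{i−1}·τ^{n_i − 1} for every i ≥ 0, and suppose L_t ≤ max{τ·L, L_{−1}}. Then the total count n of evaluations satisfies: Σ_{i=0}^{t} n_i ≤ (1 − log η / log τ)·(t + 1) + (1/log τ)·max{log(τ·L/L_{−1}), 0}. -/
/-! Taking logarithms in `L_{i+1} = η L_i τ^(n_i - 1)` and telescoping gives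
`log (L_{t+1} / L₋₁) = (t + 1) log η + (∑ (n_i - 1)) log τ`; the hypothesis on `L_{t+1}` bounds
the left-hand side by `max (log (τ L / L₋₁)) 0`, and dividing by `log τ > 0` gives the claim. -/

open Finset Real

theorem eq_pow_mul_pow_sum_mul {M : Type*} [CommMonoid M] {η τ : M} {x : ℕ → M} {k : ℕ → ℕ}
    {m : ℕ} (h : ∀ i < m, x (i + 1) = η * x i * τ ^ k i) :
    x m = η ^ m * τ ^ (∑ i ∈ range m, k i) * x 0 := by
  induction m with
  | zero => simp
  | succ m ih =>
    rw [h m m.lt_succ_self, ih fun i hi => h i (by omega), sum_range_succ, pow_succ, pow_add]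
    ac_rfl

theorem Real.log_div_le_max_log_div_zero {x y a : ℝ} (hx : 0 < x) (hy : 0 < y)
    (h : x ≤ max a y) : log (x / y) ≤ max (log (a / y)) 0 := by
  rcases le_total a y with hay | hya
  · rw [max_eq_right hay] at h
    exact (log_nonpos (by positivity) ((div_le_one hy).mpr h)).trans (le_max_right _ _)
  · rw [max_eq_left hya] at h
    exact (log_le_log (by positivity) (div_le_div_of_nonneg_right h hy.le)).trans
      (le_max_left _ _)

/-- `Lseq 0` is the initial estimate `L₋₁` and `Lseq (i+1)` the estimate `Lᵢ` accepted at
iteration `i`. -/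
theorem stmt_3_general (τ η L : ℝ) (hτ : 1 < τ) (hη0 : 0 < η)
    (t : ℕ) (Lseq : ℕ → ℝ) (hLpos : ∀ i, 0 < Lseq i) (n : ℕ → ℕ) (hn : ∀ i, 1 ≤ n i)
    (hrec : ∀ i ≤ t, Lseq (i + 1) = η * Lseq i * τ ^ (n i - 1))
    (hbound : Lseq (t + 1) ≤ max (τ * L) (Lseq 0)) :
    (∑ i ∈ Finset.range (t + 1), (n i : ℝ))
      ≤ (1 - Real.log η / Real.log τ) * (t + 1)
        + (1 / Real.log τ) * max (Real.log (τ * L / Lseq 0)) 0 := by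
  have hlogτ : 0 < log τ := log_pos hτ
  set S : ℕ := ∑ i ∈ range (t + 1), (n i - 1)
  have hratio : Lseq (t + 1) / Lseq 0 = η ^ (t + 1) * τ ^ S := by
    rw [eq_pow_mul_pow_sum_mul fun i hi => hrec i (by omega), mul_div_assoc,
      div_self (hLpos 0).ne', mul_one]
  have hlog : log (Lseq (t + 1) / Lseq 0) = (t + 1) * log η + S * log τ := by
    rw [hratio, log_mul (by positivity) (by positivity), log_pow, log_pow]
    push_cast
    ring
  have hcount : ∑ i ∈ range (t + 1), (n i : ℝ) = S + (t + 1) := by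
    simp only [S, Nat.cast_sum, Nat.cast_sub (hn _), Nat.cast_one, sum_sub_distrib,
      sum_const, card_range, nsmul_eq_mul, mul_one]
    push_cast
    ring
  have hS : (S : ℝ) * log τ ≤ max (log (τ * L / Lseq 0)) 0 - (t + 1) * log η := by
    linarith [log_div_le_max_log_div_zero (hLpos _) (hLpos 0) hbound]
  have hS' := (le_div_iff₀ hlogτ).mpr hS
  calc ∑ i ∈ range (t + 1), (n i : ℝ)
      ≤ (max (log (τ * L / Lseq 0)) 0 - (t + 1) * log η) / log τ + (t + 1) := by
        rw [hcount]; gcongr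
    _ = _ := by field_simp; ring

/-- Bound on the total number of evaluations of the sufficient decrease condition in the
backtracking line-search. Here `Lseq 0` plays the role of the initial estimate `L₋₁` and
`Lseq (i+1)` the estimate accepted at iteration `i`, so that
`Lseq (i+1) = η · Lseq i · τ^(nᵢ − 1)`. -/
theorem stmt_3 (τ η L : ℝ) (hτ : 1 < τ) (hη0 : 0 < η) (hη1 : η ≤ 1) (hL : 0 < L)
    (t : ℕ) (Lseq : ℕ → ℝ) (hLpos : ∀ i, 0 < Lseq i) (n : ℕ → ℕ) (hn : ∀ i, 1 ≤ n i)
    (hrec : ∀ i ≤ t, Lseq (i + 1) = η * Lseq i * τ ^ (n i - 1))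
    (hbound : Lseq (t + 1) ≤ max (τ * L) (Lseq 0)) :
    (∑ i ∈ Finset.range (t + 1), (n i : ℝ))
      ≤ (1 - Real.log η / Real.log τ) * (t + 1)
        + (1 / Real.log τ) * max (Real.log (τ * L / Lseq 0)) 0 :=
  stmt_3_general τ η L hτ hη0 t Lseq hLpos n hn hrec hbound
end

section
/- Let H be a real inner product space, A ⊆ H a nonempty compact set, S ⊆ A a nonempty subset, f : H → ℝ differentiable at x ∈ H with x ∈ conv(S), and δ ∈ (0, 1]. Suppose s ∈ H satisfies ⟨∇f(x), s − x⟩ ≤ δ·inf_{s' ∈ A} ⟨∇f(x), s' − x⟩ and v ∈ S satisfies ⟨∇f(x), x − v⟩ ≤ δ·inf_{v' ∈ S} ⟨∇f(x), x − v'⟩. Then the pairwise gap satisfies ⟨∇f(x), v − s⟩ ≥ δ·g^FW(x), where g^FW(x) := sup_{s' ∈ conv(A)} ⟨∇f(x), x − s'⟩ is the Frank-Wolfe gap. -/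
/-! The affine function `p ↦ ⟪∇f(x), x - p⟫` is both convex and concave, so by the maximum
principle its supremum over `conv A` is already its supremum over `A`; the condition on
`s` then gives `⟪∇f(x), x - s⟫ ≥ δ g^FW(x)`. By the minimum principle, `x ∈ conv S` yields
an atom of `S` where the function is at most its value `0` at `x`, so the condition on `v` forces
`⟪∇f(x), x - v⟫ ≤ 0`. The pairwise gap is the difference of these two quantities. -/

open scoped RealInnerProductSpace
open Set

section MaximumPrinciple

variable {𝕜 E β : Type*} [Field 𝕜] [LinearOrder 𝕜] [IsStrictOrderedRing 𝕜]
  [AddCommGroup E] [Module 𝕜 E] [ConditionallyCompleteLinearOrder β] [AddCommGroup β]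
  [IsOrderedAddMonoid β] [Module 𝕜 β] [IsStrictOrderedModule 𝕜 β]
  {s t : Set E} {f : E → β} {x : E}

lemma ConvexOn.le_csSup_image_of_mem_convexHull (hf : ConvexOn 𝕜 t f) (hst : s ⊆ t)
    (hb : BddAbove (f '' s)) (hx : x ∈ convexHull 𝕜 s) : f x ≤ sSup (f '' s) := by
  obtain ⟨y, hy, hxy⟩ := hf.exists_ge_of_mem_convexHull hst hx
  exact hxy.trans (le_csSup hb (mem_image_of_mem f hy))

lemma ConcaveOn.csInf_image_le_of_mem_convexHull (hf : ConcaveOn 𝕜 t f) (hst : s ⊆ t)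
    (hb : BddBelow (f '' s)) (hx : x ∈ convexHull 𝕜 s) : sInf (f '' s) ≤ f x := by
  obtain ⟨y, hy, hyx⟩ := hf.exists_le_of_mem_convexHull hst hx
  exact (csInf_le hb (mem_image_of_mem f hy)).trans hyx

lemma ConvexOn.csSup_image_convexHull_le (hf : ConvexOn 𝕜 t f) (hst : s ⊆ t)
    (hb : BddAbove (f '' s)) : sSup (f '' convexHull 𝕜 s) ≤ sSup (f '' s) := by
  rcases s.eq_empty_or_nonempty with rfl | hs
  · simp
  exact csSup_le ((hs.mono (subset_convexHull 𝕜 s)).image f)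
    (forall_mem_image.2 fun _ hx => hf.le_csSup_image_of_mem_convexHull hst hb hx)

end MaximumPrinciple

section InnerSub

variable {H : Type*} [NormedAddCommGroup H] [InnerProductSpace ℝ H] (g x : H)

lemma inner_sub_right_eq_const_sub :
    (fun p : H => ⟪g, x - p⟫) = (fun _ : H => ⟪g, x⟫) - ⇑(innerₛₗ ℝ g) := by
  ext p
  simp [inner_sub_right]

lemma convexOn_inner_sub_right : ConvexOn ℝ univ fun p : H => ⟪g, x - p⟫ := by
  rw [inner_sub_right_eq_const_sub]
  exact (convexOn_const _ convex_univ).sub ((innerₛₗ ℝ g).concaveOn convex_univ)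

lemma concaveOn_inner_sub_right : ConcaveOn ℝ univ fun p : H => ⟪g, x - p⟫ := by
  rw [inner_sub_right_eq_const_sub]
  exact (concaveOn_const _ convex_univ).sub ((innerₛₗ ℝ g).convexOn convex_univ)

lemma sInf_image_inner_sub_left (T : Set H) :
    sInf ((fun p => ⟪g, p - x⟫) '' T) = -sSup ((fun p => ⟪g, x - p⟫) '' T) := by
  have : (fun p => ⟪g, p - x⟫) = Neg.neg ∘ fun p => ⟪g, x - p⟫ := by
    ext p
    simp [← inner_neg_right]
  rw [this, image_comp, image_neg_eq_neg, Real.sInf_neg]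

end InnerSub

theorem stmt_5_general {H : Type*} [NormedAddCommGroup H] [InnerProductSpace ℝ H]
    (A : Set H) (hAc : IsCompact A)
    (S : Set H) (hSA : S ⊆ A)
    (x gradf : H)
    (hx : x ∈ convexHull ℝ S)
    (δ : ℝ) (hδ : δ ∈ Set.Ioc (0 : ℝ) 1) (s : H)
    (hs : ⟪gradf, s - x⟫ ≤ δ * sInf ((fun s' => ⟪gradf, s' - x⟫) '' A))
    (v : H)
    (hv : ⟪gradf, x - v⟫ ≤ δ * sInf ((fun v' => ⟪gradf, x - v'⟫) '' S)) :
    ⟪gradf, v - s⟫ ≥ δ * sSup ((fun s' => ⟪gradf, x - s'⟫) '' (convexHull ℝ A)) := by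
  set L : H → ℝ := fun p => ⟪gradf, x - p⟫
  have hLA : IsCompact (L '' A) := hAc.image (by fun_prop)
  have away_nonpos : ⟪gradf, x - v⟫ ≤ 0 := by
    have hinf : sInf (L '' S) ≤ L x :=
      (concaveOn_inner_sub_right gradf x).csInf_image_le_of_mem_convexHull (subset_univ S)
        (hLA.bddBelow.mono (image_mono hSA)) hx
    simp only [L, sub_self, inner_zero_right] at hinf
    exact hv.trans (mul_nonpos_of_nonneg_of_nonpos hδ.1.le hinf)
  have fw : δ * sSup (L '' convexHull ℝ A) ≤ ⟪gradf, x - s⟫ := by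
    rw [sInf_image_inner_sub_left] at hs
    calc δ * sSup (L '' convexHull ℝ A) ≤ δ * sSup (L '' A) := mul_le_mul_of_nonneg_left
          ((convexOn_inner_sub_right gradf x).csSup_image_convexHull_le (subset_univ A)
            hLA.bddAbove) hδ.1.le
      _ ≤ ⟪gradf, x - s⟫ := by rw [← neg_sub, inner_neg_right]; linarith
  calc δ * sSup (L '' convexHull ℝ A) ≤ ⟪gradf, x - s⟫ - ⟪gradf, x - v⟫ := by linarith
    _ = ⟪gradf, v - s⟫ := by rw [← inner_sub_right, sub_sub_sub_cancel_left]

/-- The pairwise gap `⟨∇f(x), v − s⟩` of approximate FW and away atoms lower bounds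
`δ` times the Frank-Wolfe gap. -/
theorem stmt_5 {H : Type*} [NormedAddCommGroup H] [InnerProductSpace ℝ H]
    (A : Set H) (hA : A.Nonempty) (hAc : IsCompact A)
    (S : Set H) (hSA : S ⊆ A) (hS : S.Nonempty)
    (f : H → ℝ) (x gradf : H) (hf : HasFDerivAt f ((innerSL ℝ) gradf) x)
    (hx : x ∈ convexHull ℝ S)
    (δ : ℝ) (hδ : δ ∈ Set.Ioc (0 : ℝ) 1) (s : H)
    (hs : ⟪gradf, s - x⟫ ≤ δ * sInf ((fun s' => ⟪gradf, s' - x⟫) '' A))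
    (v : H) (hvS : v ∈ S)
    (hv : ⟪gradf, x - v⟫ ≤ δ * sInf ((fun v' => ⟪gradf, x - v'⟫) '' S)) :
    ⟪gradf, v - s⟫ ≥ δ * sSup ((fun s' => ⟪gradf, x - s'⟫) '' (convexHull ℝ A)) :=
  stmt_5_general A hAc S hSA x gradf hx δ hδ s hs v hv
end

section
/- Let f : H → ℝ on a real inner product space H, let x, y ∈ H, g ≥ 0, C > 0 and γ_max > 0 be real numbers. Assume that for every ξ ∈ [0, γ_max], f(y) ≤ f(x) − ξ·g + (ξ²/2)·C, and assume that either g/C < γ_max or γ_max ≥ 1. Then f(y) ≤ f(x) − (g/2)·min{g/C, 1}. -/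
/-- Per-iteration decrease at good steps: if the surrogate bound holds on `[0, γ_max]`
and either `g/C < γ_max` or `γ_max ≥ 1`, then `f(y) ≤ f(x) − (g/2)·min{g/C, 1}`. -/
theorem stmt_7 {H : Type*} [NormedAddCommGroup H] [InnerProductSpace ℝ H]
    (f : H → ℝ) (x y : H) (g C γmax : ℝ) (hg : 0 ≤ g) (hC : 0 < C) (hγmax : 0 < γmax)
    (hub : ∀ ξ ∈ Set.Icc (0 : ℝ) γmax, f y ≤ f x - ξ * g + ξ ^ 2 / 2 * C)
    (hgood : g / C < γmax ∨ 1 ≤ γmax) :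
    f y ≤ f x - g / 2 * min (g / C) 1 := by
  have hgC : 0 ≤ g / C := div_nonneg hg hC.le
  rcases le_or_gt (g / C) 1 with h1 | h1
  · rw [min_eq_left h1]
    have hle : g / C ≤ γmax := by
      rcases hgood with h | h
      · exact h.le
      · exact h1.trans h
    have := hub (g / C) ⟨hgC, hle⟩
    have hCne : C ≠ 0 := hC.ne'
    calc f y ≤ f x - g / C * g + (g / C) ^ 2 / 2 * C := this
      _ = f x - g / 2 * (g / C) := by field_simp; ring
  · rw [min_eq_right h1.le]
    have hCg : C < g := by
      have := (one_lt_div hC).mp h1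
      linarith
    have hle : (1 : ℝ) ≤ γmax := by
      rcases hgood with h | h
      · linarith
      · exact h
    have := hub 1 ⟨zero_le_one, hle⟩
    calc f y ≤ f x - 1 * g + 1 ^ 2 / 2 * C := this
      _ ≤ f x - g / 2 * 1 := by nlinarith
end

section
/- Let H be a real inner product space, f : H → ℝ, R > 0 and h₀ ≥ 0, and let (x_k)_{0 ≤ k ≤ t+1} be points of H, (g_k)_{0 ≤ k ≤ t} nonnegative reals and (L_k)_{0 ≤ k ≤ t} positive reals such that f(x_{k+1}) ≤ f(x_k) − g_k²/(2·L_k·R²) for every 0 ≤ k ≤ t, and f(x₀) − f(x_{t+1}) ≤ h₀. Then min_{0 ≤ k ≤ t} g_k ≤ R·√(2·h₀·L̄_t/(t+1)), where L̄_t := (Σ_{k=0}^{t} L_k)/(t+1) is the arithmetic mean of the Lipschitz estimates. -/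
/-!
Summing the per-step decreases telescopes to `∑ₖ gₖ² / Lₖ ≤ 2 h₀ R²`. Bounding every `gₖ` from
below by their minimum `m` and applying Sedrakyan's form of Cauchy–Schwarz to the constant
sequence `m` gives `((t + 1) m)² ≤ 2 h₀ R² ∑ₖ Lₖ`, which is the claim after taking square roots.
-/

open Finset

theorem sum_range_le_sub_of_le_sub {α : Type*} [AddCommGroup α] [PartialOrder α]
    [IsOrderedAddMonoid α] {a d : ℕ → α} {n : ℕ} (h : ∀ k < n, a (k + 1) ≤ a k - d k) :
    ∑ k ∈ range n, d k ≤ a 0 - a n :=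
  (sum_le_sum fun k hk => le_sub_comm.mp (h k (mem_range.mp hk))).trans_eq (sum_range_sub' a n)

theorem inf'_le_sqrt_of_sum_sq_div_le {ι : Type*} (s : Finset ι) (hs : s.Nonempty)
    {g L : ι → ℝ} {C : ℝ} (hL : ∀ i ∈ s, 0 < L i) (h : ∑ i ∈ s, g i ^ 2 / L i ≤ C) :
    s.inf' hs g ≤ √(C * ((∑ i ∈ s, L i) / #s) / #s) := by
  set m := s.inf' hs g
  rcases le_or_gt m 0 with hm | hm
  · exact hm.trans (Real.sqrt_nonneg _)
  have hS : 0 < ∑ i ∈ s, L i := sum_pos hL hs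
  have hcard : (0 : ℝ) < #s := Nat.cast_pos.mpr hs.card_pos
  have titu : (#s * m) ^ 2 / ∑ i ∈ s, L i ≤ C :=
    calc (#s * m) ^ 2 / ∑ i ∈ s, L i = (∑ _i ∈ s, m) ^ 2 / ∑ i ∈ s, L i := by
          rw [sum_const, nsmul_eq_mul]
      _ ≤ ∑ i ∈ s, m ^ 2 / L i := sq_sum_div_le_sum_sq_div s _ hL
      _ ≤ ∑ i ∈ s, g i ^ 2 / L i := sum_le_sum fun i hi =>
          div_le_div_of_nonneg_right (pow_le_pow_left₀ hm.le (inf'_le g hi) 2) (hL i hi).le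
      _ ≤ C := h
  rw [Real.le_sqrt' hm]
  rw [div_le_iff₀ hS] at titu
  field_simp
  linarith

/-- Convergence rate of backtracking Matching Pursuit on non-convex objectives:
the minimal directional gap is bounded by `R·√(2h₀·L̄_t/(t+1))` where
`L̄_t` is the arithmetic mean of the accepted Lipschitz estimates. -/
theorem stmt_9 {H : Type*} [NormedAddCommGroup H] [InnerProductSpace ℝ H]
    (f : H → ℝ) (R h₀ : ℝ) (hR : 0 < R) (t : ℕ)
    (x : ℕ → H) (g L : ℕ → ℝ) (hL : ∀ k ≤ t, 0 < L k)
    (hdec : ∀ k ≤ t, f (x (k + 1)) ≤ f (x k) - g k ^ 2 / (2 * L k * R ^ 2))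
    (hsub : f (x 0) - f (x (t + 1)) ≤ h₀) :
    (Finset.range (t + 1)).inf' (by simp) g
      ≤ R * Real.sqrt (2 * h₀ * ((∑ k ∈ Finset.range (t + 1), L k) / (t + 1)) / (t + 1)) := by
  have hdecrease : ∑ k ∈ range (t + 1), g k ^ 2 / (2 * L k * R ^ 2) ≤ h₀ :=
    (sum_range_le_sub_of_le_sub (a := fun k => f (x k)) fun k hk => hdec k (by omega)).trans hsub
  have hsum : ∑ k ∈ range (t + 1), g k ^ 2 / L k ≤ 2 * h₀ * R ^ 2 :=
    calc ∑ k ∈ range (t + 1), g k ^ 2 / L k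
        = 2 * R ^ 2 * ∑ k ∈ range (t + 1), g k ^ 2 / (2 * L k * R ^ 2) := by
          rw [mul_sum]
          refine sum_congr rfl fun k hk => ?_
          have hLk := hL k (mem_range_succ_iff.mp hk)
          field_simp
      _ ≤ 2 * R ^ 2 * h₀ := by gcongr
      _ = 2 * h₀ * R ^ 2 := by ring
  calc (range (t + 1)).inf' _ g
      ≤ √(2 * h₀ * R ^ 2 * ((∑ k ∈ range (t + 1), L k) / (t + 1)) / (t + 1)) := by
        have key := inf'_le_sqrt_of_sum_sq_div_le (range (t + 1)) nonempty_range_add_one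
          (fun k hk => hL k (mem_range_succ_iff.mp hk)) hsum
        rwa [card_range, Nat.cast_add_one] at key
    _ = R * √(2 * h₀ * ((∑ k ∈ range (t + 1), L k) / (t + 1)) / (t + 1)) := by
        rw [← Real.sqrt_sq hR.le, ← Real.sqrt_mul (sq_nonneg R), Real.sqrt_sq hR.le]
        ring_nf
end

section
/- Let H be a real inner product space, f : H → ℝ, x ∈ H, d ∈ H with d ≠ 0, and let g ≥ 0, L > 0, γ_max > 0 be real numbers. Set γ := min{g/(L·‖d‖²), γ_max}, and assume f(x + γ·d) ≤ f(x) − γ·g + (γ²·L/2)·‖d‖² and that either γ_max ≥ 1 or γ < γ_max. Then for every ξ ∈ [0, 1], f(x + γ·d) ≤ f(x) − ξ·g + (ξ²·L/2)·‖d‖². -/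
/-! The quadratic surrogate `t ↦ -t g + t² c / 2` (with `c = L‖d‖²`) has its unconstrained
minimiser at `g / c` and is decreasing to the left of it. If `γ = g / c`, then `γ` minimises it
on all of `ℝ`. Otherwise `γ = γ_max < g / c`, so the good-step condition forces `γ_max ≥ 1`, and
every `ξ ∈ [0, 1]` lies to the left of `γ`. -/

theorem neg_mul_add_sq_mul_div_two_min_le {g c : ℝ} (hc : 0 < c) (ξ : ℝ) :
    -(g / c * g) + (g / c) ^ 2 * c / 2 ≤ -(ξ * g) + ξ ^ 2 * c / 2 := by
  have hsq : 0 ≤ c / 2 * (ξ - g / c) ^ 2 := by positivity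
  have hexpand : c / 2 * (ξ - g / c) ^ 2
      = (-(ξ * g) + ξ ^ 2 * c / 2) - (-(g / c * g) + (g / c) ^ 2 * c / 2) := by
    field_simp
    ring
  linarith

theorem neg_mul_add_sq_mul_div_two_le_of_le_of_mul_le {g c γ ξ : ℝ} (hc : 0 ≤ c) (hξγ : ξ ≤ γ)
    (hγ : γ * c ≤ g) :
    -(γ * g) + γ ^ 2 * c / 2 ≤ -(ξ * g) + ξ ^ 2 * c / 2 := by
  have hsum : (ξ + γ) * c / 2 ≤ g := by
    have := mul_le_mul_of_nonneg_right hξγ hc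
    linarith
  have hfactor : (-(γ * g) + γ ^ 2 * c / 2) - (-(ξ * g) + ξ ^ 2 * c / 2)
      = (γ - ξ) * ((ξ + γ) * c / 2 - g) := by ring
  have := mul_nonneg (sub_nonneg.mpr hξγ) (sub_nonneg.mpr hsum)
  linarith

theorem stmt_10_general {H : Type*} [NormedAddCommGroup H] [InnerProductSpace ℝ H]
    (f : H → ℝ) (x d : H) (hd : d ≠ 0) (g L γmax : ℝ) (hL : 0 < L)
    (γ : ℝ) (hγ : γ = min (g / (L * ‖d‖ ^ 2)) γmax)
    (hsd : f (x + γ • d) ≤ f x - γ * g + γ ^ 2 * L / 2 * ‖d‖ ^ 2)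
    (hgood : 1 ≤ γmax ∨ γ < γmax) :
    ∀ ξ ∈ Set.Icc (0 : ℝ) 1,
      f (x + γ • d) ≤ f x - ξ * g + ξ ^ 2 * L / 2 * ‖d‖ ^ 2 := by
  rintro ξ ⟨-, hξ1⟩
  set c := L * ‖d‖ ^ 2 with hc_def
  have hc : 0 < c := mul_pos hL (pow_pos (norm_pos_iff.mpr hd) 2)
  suffices key : -(γ * g) + γ ^ 2 * c / 2 ≤ -(ξ * g) + ξ ^ 2 * c / 2 by
    rw [hc_def] at key
    linarith
  rcases eq_or_ne γ (g / c) with hmin | hne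
  · rw [hmin]
    exact neg_mul_add_sq_mul_div_two_min_le hc ξ
  · have hγmax : γ = γmax := by
      rcases min_choice (g / c) γmax with h | h
      · exact absurd (hγ.trans h) hne
      · exact hγ.trans h
    have h1γ : 1 ≤ γ := by
      rcases hgood with h | h
      · exact hγmax ▸ h
      · exact absurd hγmax h.ne
    have hγc : γ * c ≤ g := by
      rw [← le_div_iff₀ hc, hγ]
      exact min_le_left _ _
    exact neg_mul_add_sq_mul_div_two_le_of_le_of_mul_le hc.le (hξ1.trans h1γ) hγc

/-- Decrease inequality at good steps: when either `γ_max ≥ 1` or the accepted step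
`γ = min{g/(L‖d‖²), γ_max}` is interior, the surrogate bound extends to all of `[0, 1]`. -/
theorem stmt_10 {H : Type*} [NormedAddCommGroup H] [InnerProductSpace ℝ H]
    (f : H → ℝ) (x d : H) (hd : d ≠ 0) (g L γmax : ℝ) (hg : 0 ≤ g) (hL : 0 < L)
    (hγmax : 0 < γmax) (γ : ℝ) (hγ : γ = min (g / (L * ‖d‖ ^ 2)) γmax)
    (hsd : f (x + γ • d) ≤ f x - γ * g + γ ^ 2 * L / 2 * ‖d‖ ^ 2)
    (hgood : 1 ≤ γmax ∨ γ < γmax) :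
    ∀ ξ ∈ Set.Icc (0 : ℝ) 1,
      f (x + γ • d) ≤ f x - ξ * g + ξ ^ 2 * L / 2 * ‖d‖ ^ 2 :=
  stmt_10_general f x d hd g L γmax hL γ hγ hsd hgood
end

section
/- Let H be a finite-dimensional real inner product space, f : H → ℝ convex and differentiable, A ⊆ H a nonempty compact set with C := conv(A), δ ∈ (0, 1] and x ∈ H. Suppose s ∈ H satisfies ⟨∇f(x), s − x⟩ ≤ δ·inf_{s' ∈ A} ⟨∇f(x), s' − x⟩. Then ⟨∇f(x), x − s⟩ ≥ δ·(f(x) − ψ(∇f(x))), where ψ(u) := −f*(u) − σ_C(−u), f*(u) := sup_{y ∈ H} (⟨u, y⟩ − f(y)) is the convex (Fenchel) conjugate of f, and σ_C(u) := sup_{z ∈ C} ⟨u, z⟩ is the support function of C. -/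
/-!
The tangent-plane inequality gives the Fenchel–Young identity `f*(∇f(x)) = ⟪∇f(x), x⟫ - f(x)`,
and the linear functional `⟪-∇f(x), ·⟫` attains its maximum over `conv(A)` at a minimiser of
`⟪∇f(x), ·⟫` on the compact set `A`. Hence
`f(x) - ψ(∇f(x)) = -min_{a ∈ A} ⟪∇f(x), a - x⟫`, and the claim is a rearrangement of the
hypothesis on `s`.
-/

open scoped RealInnerProductSpace

theorem ConvexOn.add_apply_sub_le_of_hasFDerivAt {E : Type*} [NormedAddCommGroup E]
    [NormedSpace ℝ E] {f : E → ℝ} {f' : E →L[ℝ] ℝ} {x : E} (hf : ConvexOn ℝ Set.univ f)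
    (hf' : HasFDerivAt f f' x) (y : E) : f x + f' (y - x) ≤ f y := by
  let γ := AffineMap.lineMap (k := ℝ) x y
  have hγ : ConvexOn ℝ Set.univ (f ∘ γ) := hf.comp_affineMap γ
  have hγ' : HasDerivAt γ (y - x) 0 := by
    simpa [γ] using AffineMap.hasDerivAt_lineMap (a := x) (b := y) (x := (0 : ℝ))
  have hfγ : HasDerivAt (f ∘ γ) (f' (y - x)) 0 :=
    (by simpa [γ] using hf' : HasFDerivAt f f' (γ 0)).comp_hasDerivAt 0 hγ'
  have := hγ.le_slope_of_hasDerivAt (Set.mem_univ 0) (Set.mem_univ 1) one_pos hfγ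
  simp [slope_def_field, γ] at this
  linarith [map_sub f' y x]

theorem ConvexOn.csSup_range_inner_sub_eq_of_hasFDerivAt {H : Type*} [NormedAddCommGroup H]
    [InnerProductSpace ℝ H] {f : H → ℝ} {g x : H} (hf : ConvexOn ℝ Set.univ f)
    (hg : HasFDerivAt f (innerSL ℝ g) x) :
    sSup (Set.range fun y => ⟪g, y⟫ - f y) = ⟪g, x⟫ - f x := by
  refine IsGreatest.csSup_eq ⟨⟨x, rfl⟩, Set.forall_mem_range.2 fun y => ?_⟩
  have := hf.add_apply_sub_le_of_hasFDerivAt hg y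
  simp only [innerSL_apply_apply, inner_sub_right] at this
  linarith

theorem IsGreatest.image_convexHull {E : Type*} [AddCommGroup E] [Module ℝ E] {φ : E → ℝ}
    {A : Set E} {m : ℝ} (hφ : ConvexOn ℝ (convexHull ℝ A) φ) (hm : IsGreatest (φ '' A) m) :
    IsGreatest (φ '' convexHull ℝ A) m := by
  refine ⟨Set.image_mono (subset_convexHull ℝ A) hm.1, ?_⟩
  rintro _ ⟨z, hz, rfl⟩
  obtain ⟨a, ha, hza⟩ := hφ.exists_ge_of_mem_convexHull (subset_convexHull ℝ A) hz
  exact hza.trans (hm.2 ⟨a, ha, rfl⟩)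

theorem stmt_11_general {H : Type*} [NormedAddCommGroup H] [InnerProductSpace ℝ H]
    (f : H → ℝ) (hconv : ConvexOn ℝ Set.univ f)
    (A : Set H) (hA : A.Nonempty) (hAc : IsCompact A)
    (δ : ℝ) (x gradf : H)
    (hgrad : HasFDerivAt f ((innerSL ℝ) gradf) x) (s : H)
    (hs : ⟪gradf, s - x⟫ ≤ δ * sInf ((fun s' => ⟪gradf, s' - x⟫) '' A)) :
    ⟪gradf, x - s⟫ ≥
      δ * (f x - (-(sSup (Set.range fun y => ⟪gradf, y⟫ - f y))
        - sSup ((fun z => ⟪-gradf, z⟫) '' convexHull ℝ A))) := by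
  obtain ⟨a, ha, hmin⟩ := hAc.exists_isMinOn hA (f := fun z => ⟪gradf, z⟫) (by fun_prop)
  have hinf : sInf ((fun s' => ⟪gradf, s' - x⟫) '' A) = ⟪gradf, a - x⟫ :=
    IsLeast.csInf_eq ⟨⟨a, ha, rfl⟩, by
      rintro _ ⟨b, hb, rfl⟩
      simpa only [inner_sub_right, sub_le_sub_iff_right] using isMinOn_iff.1 hmin b hb⟩
  have hsupp : sSup ((fun z => ⟪-gradf, z⟫) '' convexHull ℝ A) = ⟪-gradf, a⟫ := by
    refine IsGreatest.csSup_eq (IsGreatest.image_convexHull ?_ ⟨⟨a, ha, rfl⟩, ?_⟩)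
    · exact ((innerₗ H (-gradf)).convexOn convex_univ).subset (Set.subset_univ _)
        (convex_convexHull ℝ A)
    · rintro _ ⟨b, hb, rfl⟩
      simpa only [inner_neg_left, neg_le_neg_iff] using isMinOn_iff.1 hmin b hb
  rw [hconv.csSup_range_inner_sub_eq_of_hasFDerivAt hgrad, hsupp, inner_neg_left]
  rw [hinf] at hs
  simp only [inner_sub_right] at hs ⊢
  linarith

/-- Relation between the directional gap of an approximate LMO output and the primal-dual
gap `f(x) − ψ(∇f(x))`, where `ψ(u) = −f*(u) − σ_C(−u)` with `f*` the Fenchel conjugate of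
`f` and `σ_C` the support function of `C = conv(A)`. -/
theorem stmt_11 {H : Type*} [NormedAddCommGroup H] [InnerProductSpace ℝ H]
    [FiniteDimensional ℝ H]
    (f : H → ℝ) (hconv : ConvexOn ℝ Set.univ f) (hdiff : Differentiable ℝ f)
    (A : Set H) (hA : A.Nonempty) (hAc : IsCompact A)
    (δ : ℝ) (hδ : δ ∈ Set.Ioc (0 : ℝ) 1) (x gradf : H)
    (hgrad : HasFDerivAt f ((innerSL ℝ) gradf) x) (s : H)
    (hs : ⟪gradf, s - x⟫ ≤ δ * sInf ((fun s' => ⟪gradf, s' - x⟫) '' A)) :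
    ⟪gradf, x - s⟫ ≥
      δ * (f x - (-(sSup (Set.range fun y => ⟪gradf, y⟫ - f y))
        - sSup ((fun z => ⟪-gradf, z⟫) '' convexHull ℝ A))) :=
  stmt_11_general f hconv A hA hAc δ x gradf hgrad s hs
end

section
/- Let δ ∈ (0, 1] and M ≥ 0 be real numbers, let good : ℕ → Bool mark each step as good or bad, and for t ∈ ℕ let N_t denote the number of good steps among {0, …, t−1}. Let (e_k)_{k ≥ 0} and (L_k)_{k ≥ 0} be sequences of nonnegative reals such that: (i) if step k is good, then e_{k+1} ≤ (1 − δ·ξ_k)·e_k + (ξ_k²·L_k/2)·M², where ξ_k := 2/(δ·N_k + 2); (ii) if step k is bad, then e_{k+1} ≤ e_k. Then for every t with N_t ≥ 1, e_t ≤ 2·L̄_t·M²/(δ²·N_t + δ) + 4·(1 − δ)·e_0/(δ²·N_t² + δ·N_t), where L̄_t := (Σ_{k < t, k good} L_k)/N_t is the average Lipschitz estimate over good steps. -/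
/-!
Multiply the good-step recursion by the weight `a n = ((n - 2)δ + 2)((n - 1)δ + 2)/2`
(`rateWeight δ n`), evaluated at the number `n` of good steps so far. Since
`a (n + 1) (1 - δ ξ) = a n` and `a (n + 1) ξ² / 2 ≤ 1` for `ξ = 2/(δ n + 2)`, a good step gives
`a (n + 1) e_{k+1} ≤ a n e_k + L_k M²`, while a bad step leaves `n` unchanged and does not
increase `e`. Telescoping gives `a (N t) e_t ≤ (1 - δ)(2 - δ) e_0 + M² ∑ L_k`, and the bound
follows from `δ N (δ N + 1) ≤ 2 a N`.
-/

open Finset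

theorem le_add_sum_range_of_succ_le {α : Type*} [AddCommMonoid α] [PartialOrder α]
    [IsOrderedAddMonoid α] {u b : ℕ → α} (h : ∀ k, u (k + 1) ≤ u k + b k) (t : ℕ) :
    u t ≤ u 0 + ∑ k ∈ range t, b k := by
  induction t with
  | zero => simp
  | succ t ih =>
    rw [sum_range_succ, ← add_assoc]
    exact (h t).trans (add_le_add_left ih _)

theorem card_filter_range_succ (p : ℕ → Prop) [DecidablePred p] (t : ℕ) :
    #{k ∈ range (t + 1) | p k} = #{k ∈ range t | p k} + if p t then 1 else 0 := by
  simp only [card_filter, sum_range_succ]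

noncomputable def rateWeight (δ : ℝ) (n : ℕ) : ℝ :=
  ((n - 2) * δ + 2) * ((n - 1) * δ + 2) / 2

namespace rateWeight

variable {δ : ℝ}

theorem zero (δ : ℝ) : rateWeight δ 0 = (1 - δ) * (2 - δ) := by
  simp only [rateWeight]; push_cast; ring

theorem nonneg (hδ0 : 0 ≤ δ) (hδ1 : δ ≤ 1) (n : ℕ) : 0 ≤ rateWeight δ n := by
  have hn : (0 : ℝ) ≤ n := n.cast_nonneg
  unfold rateWeight
  have h₁ : 0 ≤ ((n : ℝ) - 2) * δ + 2 := by nlinarith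
  have h₂ : 0 ≤ ((n : ℝ) - 1) * δ + 2 := by nlinarith
  positivity

theorem succ_mul_one_sub (hδ0 : 0 ≤ δ) (n : ℕ) :
    rateWeight δ (n + 1) * (1 - δ * (2 / (δ * n + 2))) = rateWeight δ n := by
  have : δ * n + 2 ≠ 0 := by positivity
  unfold rateWeight
  push_cast
  field_simp
  ring

theorem succ_mul_sq_div_two_le_one (hδ0 : 0 ≤ δ) (n : ℕ) :
    rateWeight δ (n + 1) * ((2 / (δ * n + 2)) ^ 2 / 2) ≤ 1 := by
  have hpos : 0 < δ * n + 2 := by positivity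
  have : rateWeight δ (n + 1) * ((2 / (δ * n + 2)) ^ 2 / 2) = ((n - 1) * δ + 2) / (δ * n + 2) := by
    unfold rateWeight
    push_cast
    field_simp
    ring
  rw [this, div_le_one hpos]
  linarith

theorem mul_succ_le_of_good_step (hδ0 : 0 ≤ δ) (hδ1 : δ ≤ 1) {n : ℕ} {e e' l M : ℝ}
    (hl : 0 ≤ l)
    (h : e' ≤ (1 - δ * (2 / (δ * n + 2))) * e + (2 / (δ * n + 2)) ^ 2 * l / 2 * M ^ 2) :
    rateWeight δ (n + 1) * e' ≤ rateWeight δ n * e + l * M ^ 2 :=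
  calc rateWeight δ (n + 1) * e'
      ≤ rateWeight δ (n + 1) *
          ((1 - δ * (2 / (δ * n + 2))) * e + (2 / (δ * n + 2)) ^ 2 * l / 2 * M ^ 2) :=
        mul_le_mul_of_nonneg_left h (nonneg hδ0 hδ1 _)
    _ = rateWeight δ n * e
          + rateWeight δ (n + 1) * ((2 / (δ * n + 2)) ^ 2 / 2) * (l * M ^ 2) := by
        rw [← succ_mul_one_sub hδ0 n]; ring
    _ ≤ rateWeight δ n * e + l * M ^ 2 :=
        add_le_add_right (mul_le_of_le_one_left (by positivity : 0 ≤ l * M ^ 2)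
          (succ_mul_sq_div_two_le_one hδ0 n)) _

theorem sq_add_le_two_mul (hδ0 : 0 ≤ δ) (hδ1 : δ ≤ 1) (n : ℕ) :
    δ ^ 2 * (n : ℝ) ^ 2 + δ * n ≤ 2 * rateWeight δ n := by
  have hn : (0 : ℝ) ≤ n := n.cast_nonneg
  unfold rateWeight
  nlinarith [mul_nonneg (mul_nonneg (sub_nonneg.2 hδ1) hδ0) hn,
    mul_nonneg (sub_nonneg.2 hδ1) (by linarith : (0 : ℝ) ≤ 2 - δ)]

theorem le_of_mul_le_zero_mul_add (hδ : δ ∈ Set.Ioc 0 1) {n : ℕ} (hn : 1 ≤ n)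
    {y e₀ S : ℝ} (he₀ : 0 ≤ e₀) (hS : 0 ≤ S)
    (h : rateWeight δ n * y ≤ rateWeight δ 0 * e₀ + S) :
    y ≤ 2 * S / (δ ^ 2 * (n : ℝ) ^ 2 + δ * n)
      + 4 * (1 - δ) * e₀ / (δ ^ 2 * (n : ℝ) ^ 2 + δ * n) := by
  obtain ⟨hδ0, hδ1⟩ := hδ
  have hn' : (1 : ℝ) ≤ n := by exact_mod_cast hn
  have hP : 0 < δ ^ 2 * (n : ℝ) ^ 2 + δ * n := by positivity
  have hPa := sq_add_le_two_mul hδ0.le hδ1 n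
  have ha : 0 < rateWeight δ n := by linarith
  rw [zero] at h
  rw [← add_div, le_div_iff₀ hP]
  nlinarith [mul_le_mul_of_nonneg_left hPa hS,
    mul_le_mul_of_nonneg_left hPa (mul_nonneg (sub_nonneg.2 hδ1) he₀),
    mul_nonneg (mul_nonneg hδ0.le hP.le) (mul_nonneg (sub_nonneg.2 hδ1) he₀)]

end rateWeight

theorem stmt_13_general (δ M : ℝ) (hδ : δ ∈ Set.Ioc (0 : ℝ) 1)
    (good : ℕ → Bool) (e L : ℕ → ℝ) (he : ∀ k, 0 ≤ e k) (hL : ∀ k, 0 ≤ L k)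
    (N : ℕ → ℕ) (hN : ∀ t, N t = ((Finset.range t).filter fun k => good k = true).card)
    (hgood : ∀ k, good k = true →
      e (k + 1) ≤ (1 - δ * (2 / (δ * N k + 2))) * e k
        + (2 / (δ * N k + 2)) ^ 2 * L k / 2 * M ^ 2)
    (hbad : ∀ k, good k = false → e (k + 1) ≤ e k)
    (t : ℕ) (hNt : 1 ≤ N t) :
    e t ≤ 2 * ((∑ k ∈ (Finset.range t).filter (fun k => good k = true), L k) / N t)
            * M ^ 2 / (δ ^ 2 * N t + δ)
        + 4 * (1 - δ) * e 0 / (δ ^ 2 * (N t : ℝ) ^ 2 + δ * N t) := by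
  have hδ0 := hδ.1.le
  have hstep : ∀ k, rateWeight δ (N (k + 1)) * e (k + 1)
      ≤ rateWeight δ (N k) * e k + if good k then L k * M ^ 2 else 0 := by
    intro k
    rw [hN (k + 1), card_filter_range_succ, ← hN k]
    cases hk : good k
    · simpa using mul_le_mul_of_nonneg_left (hbad k hk) (rateWeight.nonneg hδ0 hδ.2 _)
    · simpa using rateWeight.mul_succ_le_of_good_step hδ0 hδ.2 (hL k) (hgood k hk)
  have htel := le_add_sum_range_of_succ_le (u := fun k => rateWeight δ (N k) * e k) hstep t
  rw [hN 0, range_zero, filter_empty, card_empty, ← sum_filter, ← sum_mul] at htel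
  have hN0 : (N t : ℝ) ≠ 0 := by positivity
  have hδ' : δ ≠ 0 := hδ.1.ne'
  convert rateWeight.le_of_mul_le_zero_mul_add hδ hNt (he 0)
    (mul_nonneg (sum_nonneg fun k _ => hL k) (sq_nonneg M)) htel using 2
  field_simp

/-- Core recursion of the primal-dual `O(1/t)` rate of backtracking FW variants on convex
objectives: good steps contract with weight `ξ_k = 2/(δ·N_k + 2)` and bad steps do not
increase the gap, yielding the stated bound in terms of the average Lipschitz estimate
over good steps. `N t` counts the good steps among `{0, …, t−1}`. -/
theorem stmt_13 (δ M : ℝ) (hδ : δ ∈ Set.Ioc (0 : ℝ) 1) (hM : 0 ≤ M)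
    (good : ℕ → Bool) (e L : ℕ → ℝ) (he : ∀ k, 0 ≤ e k) (hL : ∀ k, 0 ≤ L k)
    (N : ℕ → ℕ) (hN : ∀ t, N t = ((Finset.range t).filter fun k => good k = true).card)
    (hgood : ∀ k, good k = true →
      e (k + 1) ≤ (1 - δ * (2 / (δ * N k + 2))) * e k
        + (2 / (δ * N k + 2)) ^ 2 * L k / 2 * M ^ 2)
    (hbad : ∀ k, good k = false → e (k + 1) ≤ e k)
    (t : ℕ) (hNt : 1 ≤ N t) :
    e t ≤ 2 * ((∑ k ∈ (Finset.range t).filter (fun k => good k = true), L k) / N t)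
            * M ^ 2 / (δ ^ 2 * N t + δ)
        + 4 * (1 - δ) * e 0 / (δ ^ 2 * (N t : ℝ) ^ 2 + δ * N t) :=
  stmt_13_general δ M hδ good e L he hL N hN hgood hbad t hNt
end

section
/- Let β ∈ (0, 1] and R ≥ 0 be real numbers, and let (e_k)_{k ≥ 0} and (L_k)_{k ≥ 0} be sequences of nonnegative reals such that for every k ≥ 0, e_{k+1} ≤ (1 − β·ξ_k)·e_k + (ξ_k²·L_k/2)·R², where ξ_k := 2/(β·k + 2). Then for every t ≥ 1, e_t ≤ 2·L̄_t·R²/(β²·t + β) + 4·(1 − β)·e_0/(β²·t² + β·t), where L̄_t := (Σ_{k=0}^{t−1} L_k)/t. -/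
/-!
Multiplying the recursion by `a_{k+1}`, where `a_k = ((k - 2)β + 2)((k - 1)β + 2)/2`, turns the
contraction factor `1 - β ξ_k = ((k - 2)β + 2)/(kβ + 2)` into `a_{k+1}(1 - β ξ_k) = a_k`,
while the error term `a_{k+1} ξ_k² / 2 = ((k - 1)β + 2)/(kβ + 2)` stays at most `1`.
Telescoping gives `a_t e_t ≤ a_0 e_0 + R² ∑_{k<t} L_k`,
and `β²t² + βt ≤ 2 a_t` for `β ≤ 1`.
-/

namespace MatchingPursuit

noncomputable def weight (β : ℝ) (k : ℕ) : ℝ := ((k - 2) * β + 2) * ((k - 1) * β + 2) / 2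

variable {β : ℝ}

lemma weight_zero : weight β 0 = (1 - β) * (2 - β) := by
  simp only [weight]
  ring

lemma weight_succ_nonneg (hβ0 : 0 ≤ β) (hβ2 : β ≤ 2) (k : ℕ) :
    0 ≤ weight β (k + 1) := by
  have hk : (0 : ℝ) ≤ k := k.cast_nonneg
  simp only [weight]
  push_cast
  apply div_nonneg _ zero_le_two
  apply mul_nonneg <;> nlinarith

lemma weight_succ_mul_contraction (hβ0 : 0 ≤ β) (k : ℕ) :
    weight β (k + 1) * (1 - β * (2 / (β * k + 2))) = weight β k := by
  have hk : β * k + 2 ≠ 0 := by positivity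
  simp only [weight]
  push_cast
  field_simp
  ring

lemma weight_succ_mul_step_le_one (hβ0 : 0 ≤ β) (k : ℕ) :
    weight β (k + 1) * ((2 / (β * k + 2)) ^ 2 / 2) ≤ 1 := by
  have hk : 0 < β * k + 2 := by positivity
  have hratio : weight β (k + 1) * ((2 / (β * k + 2)) ^ 2 / 2)
      = ((k - 1) * β + 2) / (β * k + 2) := by
    simp only [weight]
    push_cast
    field_simp
    ring
  rw [hratio, div_le_one hk]
  linarith

lemma weight_mul_le_of_recursion (hβ0 : 0 ≤ β) (hβ2 : β ≤ 2) (R : ℝ) (e L : ℕ → ℝ)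
    (hL : ∀ k, 0 ≤ L k)
    (hrec : ∀ k : ℕ, e (k + 1) ≤ (1 - β * (2 / (β * k + 2))) * e k
      + (2 / (β * k + 2)) ^ 2 * L k / 2 * R ^ 2) (t : ℕ) :
    weight β t * e t ≤ weight β 0 * e 0 + R ^ 2 * ∑ k ∈ Finset.range t, L k := by
  induction t with
  | zero => simp
  | succ k ih =>
    have hLR : 0 ≤ L k * R ^ 2 := by have := hL k; positivity
    calc weight β (k + 1) * e (k + 1)
        ≤ weight β (k + 1) * ((1 - β * (2 / (β * k + 2))) * e k
            + (2 / (β * k + 2)) ^ 2 * L k / 2 * R ^ 2) :=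
          mul_le_mul_of_nonneg_left (hrec k) (weight_succ_nonneg hβ0 hβ2 k)
      _ = weight β (k + 1) * (1 - β * (2 / (β * k + 2))) * e k
            + weight β (k + 1) * ((2 / (β * k + 2)) ^ 2 / 2) * (L k * R ^ 2) := by ring
      _ ≤ weight β k * e k + 1 * (L k * R ^ 2) := by
          rw [weight_succ_mul_contraction hβ0]
          gcongr
          exact weight_succ_mul_step_le_one hβ0 k
      _ ≤ weight β 0 * e 0 + R ^ 2 * ∑ i ∈ Finset.range (k + 1), L i := by
          rw [Finset.sum_range_succ]
          linarith

lemma sq_mul_add_le_two_mul_weight (hβ0 : 0 ≤ β) (hβ1 : β ≤ 1) (t : ℕ) :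
    β ^ 2 * (t : ℝ) ^ 2 + β * t ≤ 2 * weight β t := by
  have hgap : 2 * weight β t - (β ^ 2 * (t : ℝ) ^ 2 + β * t)
      = (1 - β) * (3 * β * t + 2 * (2 - β)) := by
    simp only [weight]
    ring
  have : 0 ≤ (1 - β) * (3 * β * t + 2 * (2 - β)) := by
    apply mul_nonneg <;> nlinarith [(t.cast_nonneg : (0 : ℝ) ≤ t)]
  linarith

end MatchingPursuit

open MatchingPursuit in
theorem stmt_14_general (β R : ℝ) (hβ : β ∈ Set.Ioc (0 : ℝ) 1)
    (e L : ℕ → ℝ) (he : ∀ k, 0 ≤ e k) (hL : ∀ k, 0 ≤ L k)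
    (hrec : ∀ k : ℕ, e (k + 1) ≤ (1 - β * (2 / (β * k + 2))) * e k
      + (2 / (β * k + 2)) ^ 2 * L k / 2 * R ^ 2)
    (t : ℕ) (ht : 1 ≤ t) :
    e t ≤ 2 * ((∑ k ∈ Finset.range t, L k) / t) * R ^ 2 / (β ^ 2 * t + β)
      + 4 * (1 - β) * e 0 / (β ^ 2 * (t : ℝ) ^ 2 + β * t) := by
  obtain ⟨hβ0, hβ1⟩ := hβ
  set S := ∑ k ∈ Finset.range t, L k
  have ht0 : (0 : ℝ) < t := by exact_mod_cast ht
  have hP : 0 < β ^ 2 * (t : ℝ) ^ 2 + β * t := by positivity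
  have hrhs : 2 * (S / t) * R ^ 2 / (β ^ 2 * t + β)
      + 4 * (1 - β) * e 0 / (β ^ 2 * (t : ℝ) ^ 2 + β * t) =
      (2 * R ^ 2 * S + 4 * (1 - β) * e 0) / (β ^ 2 * (t : ℝ) ^ 2 + β * t) := by
    field_simp
  have htele := weight_mul_le_of_recursion hβ0.le (by linarith) R e L hL hrec t
  have he0 : (1 - β) * (2 - β) * e 0 ≤ 2 * (1 - β) * e 0 := by
    linarith [mul_nonneg (mul_nonneg hβ0.le (sub_nonneg.2 hβ1)) (he 0)]
  rw [weight_zero] at htele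
  rw [hrhs, le_div_iff₀ hP]
  calc e t * (β ^ 2 * (t : ℝ) ^ 2 + β * t)
      ≤ e t * (2 * weight β t) :=
        mul_le_mul_of_nonneg_left (sq_mul_add_le_two_mul_weight hβ0.le hβ1 t) (he t)
    _ ≤ 2 * R ^ 2 * S + 4 * (1 - β) * e 0 := by linarith

/-- Core recursion of the `O(1/t)` rate of backtracking Matching Pursuit on convex
objectives, with weights `ξ_k = 2/(β·k + 2)`. -/
theorem stmt_14 (β R : ℝ) (hβ : β ∈ Set.Ioc (0 : ℝ) 1) (hR : 0 ≤ R)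
    (e L : ℕ → ℝ) (he : ∀ k, 0 ≤ e k) (hL : ∀ k, 0 ≤ L k)
    (hrec : ∀ k : ℕ, e (k + 1) ≤ (1 - β * (2 / (β * k + 2))) * e k
      + (2 / (β * k + 2)) ^ 2 * L k / 2 * R ^ 2)
    (t : ℕ) (ht : 1 ≤ t) :
    e t ≤ 2 * ((∑ k ∈ Finset.range t, L k) / t) * R ^ 2 / (β ^ 2 * t + β)
      + 4 * (1 - β) * e 0 / (β ^ 2 * (t : ℝ) ^ 2 + β * t) :=
  stmt_14_general β R hβ e L he hL hrec t ht
end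

section
/- Let H be a real inner product space, f : H → ℝ convex and differentiable, B ⊆ H a nonempty compact set, δ ∈ (0, 1], R > 0, and x, x* ∈ H such that (x* − x)/R ∈ conv(B). Suppose s ∈ H satisfies ⟨∇f(x), s⟩ ≤ δ·inf_{s' ∈ B} ⟨∇f(x), s'⟩. Then ⟨−∇f(x), s⟩ ≥ (δ/R)·(f(x) − f(x*)). -/
/-!
Restricted to the segment from `x` to `x*`, the convex function `f` lies above its tangent line,
so `⟪∇f(x), x* - x⟫ ≤ f(x*) - f(x)`. A linear functional attains its infimum over `conv(B)` on `B`,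
so `inf_B ⟪∇f(x), ·⟫ ≤ ⟪∇f(x), (x* - x)/R⟫`. Chaining these with the oracle inequality and
scaling by `δ/R ≥ 0` gives the bound.
-/

open scoped RealInnerProductSpace

theorem ConvexOn.apply_sub_le_of_hasFDerivAt {E : Type*} [NormedAddCommGroup E] [NormedSpace ℝ E]
    {s : Set E} {f : E → ℝ} {f' : E →L[ℝ] ℝ} {x y : E} (hf : ConvexOn ℝ s f)
    (hx : x ∈ s) (hy : y ∈ s) (hf' : HasFDerivAt f f' x) :
    f' (y - x) ≤ f y - f x := by
  set φ : ℝ → ℝ := f ∘ AffineMap.lineMap x y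
  have hφ : ConvexOn ℝ (AffineMap.lineMap x y ⁻¹' s) φ := hf.comp_affineMap _
  have hsegment : ∀ t ∈ Set.Icc (0 : ℝ) 1, t ∈ AffineMap.lineMap x y ⁻¹' s := fun t ht =>
    hf.1.lineMap_mem hx hy ht
  have hderiv : HasDerivAt φ (f' (y - x)) 0 := by
    have hf'0 : HasFDerivAt f f' (AffineMap.lineMap x y (0 : ℝ)) := by simpa using hf'
    exact hf'0.comp_hasDerivAt 0 AffineMap.hasDerivAt_lineMap
  simpa [φ, slope] using hφ.le_slope_of_hasDerivAt (hsegment 0 (by simp)) (hsegment 1 (by simp))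
    one_pos hderiv

theorem ConcaveOn.csInf_image_le_of_mem_convexHull_s15 {E : Type*} [AddCommGroup E] [Module ℝ E]
    {s t : Set E} {f : E → ℝ} {z : E} (hf : ConcaveOn ℝ s f) (hts : t ⊆ s)
    (hbdd : BddBelow (f '' t)) (hz : z ∈ convexHull ℝ t) : sInf (f '' t) ≤ f z := by
  obtain ⟨y, hy, hyz⟩ := hf.exists_le_of_mem_convexHull hts hz
  exact (csInf_le hbdd (Set.mem_image_of_mem f hy)).trans hyz

theorem stmt_15_general {H : Type*} [NormedAddCommGroup H] [InnerProductSpace ℝ H]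
    (f : H → ℝ) (hconv : ConvexOn ℝ Set.univ f)
    (B : Set H) (hBc : IsCompact B)
    (δ R : ℝ) (hδ : δ ∈ Set.Ioc (0 : ℝ) 1) (hR : 0 < R)
    (x xstar : H) (hmem : R⁻¹ • (xstar - x) ∈ convexHull ℝ B)
    (gradf : H) (hgrad : HasFDerivAt f ((innerSL ℝ) gradf) x)
    (s : H) (hs : ⟪gradf, s⟫ ≤ δ * sInf ((fun s' => ⟪gradf, s'⟫) '' B)) :
    ⟪-gradf, s⟫ ≥ δ / R * (f x - f xstar) := by
  have hinf : sInf ((fun s' => ⟪gradf, s'⟫) '' B) ≤ R⁻¹ * ⟪gradf, xstar - x⟫ := by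
    rw [← real_inner_smul_right]
    exact ((innerₛₗ ℝ gradf).concaveOn convex_univ).csInf_image_le_of_mem_convexHull_s15
      (Set.subset_univ B) (hBc.image (continuous_const.inner continuous_id)).bddBelow hmem
  have htangent : ⟪gradf, xstar - x⟫ ≤ f xstar - f x :=
    hconv.apply_sub_le_of_hasFDerivAt (Set.mem_univ x) (Set.mem_univ xstar) hgrad
  have hscaled : δ * sInf ((fun s' => ⟪gradf, s'⟫) '' B) ≤ δ * (R⁻¹ * (f xstar - f x)) := by
    gcongr
    · exact hδ.1.le
    · exact hinf.trans (by gcongr)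
  rw [inner_neg_left, div_eq_mul_inv]
  linarith

/-- The approximate MP oracle output satisfies
`⟨−∇f(x), s⟩ ≥ (δ/R)·(f(x) − f(x*))` whenever `(x* − x)/R ∈ conv(B)`. -/
theorem stmt_15 {H : Type*} [NormedAddCommGroup H] [InnerProductSpace ℝ H]
    (f : H → ℝ) (hconv : ConvexOn ℝ Set.univ f) (hdiff : Differentiable ℝ f)
    (B : Set H) (hB : B.Nonempty) (hBc : IsCompact B)
    (δ R : ℝ) (hδ : δ ∈ Set.Ioc (0 : ℝ) 1) (hR : 0 < R)
    (x xstar : H) (hmem : R⁻¹ • (xstar - x) ∈ convexHull ℝ B)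
    (gradf : H) (hgrad : HasFDerivAt f ((innerSL ℝ) gradf) x)
    (s : H) (hs : ⟪gradf, s⟫ ≤ δ * sInf ((fun s' => ⟪gradf, s'⟫) '' B)) :
    ⟪-gradf, s⟫ ≥ δ / R * (f x - f xstar) :=
  stmt_15_general f hconv B hBc δ R hδ hR x xstar hmem gradf hgrad s hs
end

section
/- Let h, h', q be nonnegative reals and μ, Δ, L, M, G, δ, γ_max positive reals with δ ≤ 1. Assume: (i) h ≤ q²/(2·μ·Δ²); (ii) for every η ∈ [0, γ_max], h − h' ≥ η·δ·G·q − (η²/2)·L·M²; and (iii) δ·G·q/(L·M²) ≤ γ_max. Then h' ≤ (1 − (μ·G²·Δ²·δ²)/(L·M²))·h. -/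
/-!
Take the step `η* = δGq/(LM²)` that minimises the quadratic model in (ii): it is admissible by
(iii) and guarantees the decrease `h - h' ≥ (δGq)²/(2LM²)`. Geometric strong convexity (i) says
`q² ≥ 2μΔ²h`, which turns this decrease into `h - h' ≥ (μG²Δ²δ²/(LM²)) h`.
-/

open Set

theorem sq_div_two_mul_le_of_forall_mem_Icc {a b d γ : ℝ} (ha : 0 < a) (hb : 0 ≤ b)
    (hγ : b / a ≤ γ) (hd : ∀ η ∈ Icc 0 γ, η * b - η ^ 2 / 2 * a ≤ d) :
    b ^ 2 / (2 * a) ≤ d := by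
  have hmodel : b / a * b - (b / a) ^ 2 / 2 * a = b ^ 2 / (2 * a) := by
    field_simp
    ring
  exact hmodel ▸ hd (b / a) ⟨by positivity, hγ⟩

theorem stmt_16_general (h h' q μ Δ L M G δ γmax : ℝ)
    (hq : 0 ≤ q)
    (hμ : 0 < μ) (hΔ : 0 < Δ) (hL : 0 < L) (hM : 0 < M) (hG : 0 < G)
    (hδ0 : 0 < δ)
    (h1 : h ≤ q ^ 2 / (2 * μ * Δ ^ 2))
    (h2 : ∀ η ∈ Set.Icc (0 : ℝ) γmax, h - h' ≥ η * δ * G * q - η ^ 2 / 2 * L * M ^ 2)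
    (h3 : δ * G * q / (L * M ^ 2) ≤ γmax) :
    h' ≤ (1 - μ * G ^ 2 * Δ ^ 2 * δ ^ 2 / (L * M ^ 2)) * h := by
  have hLM : 0 < L * M ^ 2 := by positivity
  have hdecrease : (δ * G * q) ^ 2 / (2 * (L * M ^ 2)) ≤ h - h' :=
    sq_div_two_mul_le_of_forall_mem_Icc hLM (by positivity) h3 fun η hη => by
      linarith [h2 η hη]
  have hconvexity : 2 * μ * Δ ^ 2 * h ≤ q ^ 2 := by
    rw [mul_comm]
    exact (le_div_iff₀ (by positivity)).1 h1
  have hrate : μ * G ^ 2 * Δ ^ 2 * δ ^ 2 / (L * M ^ 2) * h ≤ (δ * G * q) ^ 2 / (2 * (L * M ^ 2)) :=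
    calc μ * G ^ 2 * Δ ^ 2 * δ ^ 2 / (L * M ^ 2) * h
        = (δ * G) ^ 2 / (2 * (L * M ^ 2)) * (2 * μ * Δ ^ 2 * h) := by
          field_simp
      _ ≤ (δ * G) ^ 2 / (2 * (L * M ^ 2)) * q ^ 2 := by gcongr
      _ = (δ * G * q) ^ 2 / (2 * (L * M ^ 2)) := by ring
  linarith

/-- Key algebraic step of the linear convergence proof (interior optimal step case):
combining geometric strong convexity `h ≤ q²/(2μΔ²)`, the decrease bound on `[0, γ_max]`,
and `δGq/(LM²) ≤ γ_max` yields a geometric decrease. -/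
theorem stmt_16 (h h' q μ Δ L M G δ γmax : ℝ)
    (hh : 0 ≤ h) (hh' : 0 ≤ h') (hq : 0 ≤ q)
    (hμ : 0 < μ) (hΔ : 0 < Δ) (hL : 0 < L) (hM : 0 < M) (hG : 0 < G)
    (hδ0 : 0 < δ) (hδ1 : δ ≤ 1) (hγmax : 0 < γmax)
    (h1 : h ≤ q ^ 2 / (2 * μ * Δ ^ 2))
    (h2 : ∀ η ∈ Set.Icc (0 : ℝ) γmax, h - h' ≥ η * δ * G * q - η ^ 2 / 2 * L * M ^ 2)
    (h3 : δ * G * q / (L * M ^ 2) ≤ γmax) :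
    h' ≤ (1 - μ * G ^ 2 * Δ ^ 2 * δ ^ 2 / (L * M ^ 2)) * h :=
  stmt_16_general h h' q μ Δ L M G δ γmax hq hμ hΔ hL hM hG hδ0 h1 h2 h3
end

section
/- Let H be a finite-dimensional real inner product space, B ⊆ H a nonempty compact symmetric set (s ∈ B implies −s ∈ B), K := conv(B) its convex hull, μ_B > 0, and f : H → ℝ differentiable. Let x, y ∈ H with y − x in the linear span of B and g_K(y − x) > 0, where g_K denotes the gauge (Minkowski functional) of K. Assume the quadratic lower bound: for every γ ∈ ℝ, f(x + γ·(y − x)) ≥ f(x) + γ·⟨∇f(x), y − x⟩ + (γ²·μ_B/2)·g_K(y − x)². Then f(y) ≥ f(x) − D²/(2·μ_B), where D := sup_{s ∈ B} ⟨∇f(x), s⟩. -/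
open scoped RealInnerProductSpace Pointwise

/-- Strong-convexity lower bound for Matching Pursuit in the atomic norm (gauge of
`K = conv(B)`): the quadratic lower bound along `y − x` yields
`f(y) ≥ f(x) − D²/(2μ_B)` where `D = sup_{s ∈ B} ⟨∇f(x), s⟩`. -/
theorem stmt_18 {H : Type*} [NormedAddCommGroup H] [InnerProductSpace ℝ H]
    [FiniteDimensional ℝ H]
    (B : Set H) (hB : B.Nonempty) (hBc : IsCompact B) (hsym : ∀ s ∈ B, -s ∈ B)
    (μB : ℝ) (hμ : 0 < μB)
    (f : H → ℝ) (hdiff : Differentiable ℝ f)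
    (x y gradf : H) (hgrad : HasFDerivAt f ((innerSL ℝ) gradf) x)
    (hspan : y - x ∈ Submodule.span ℝ B)
    (hgauge : 0 < gauge (convexHull ℝ B) (y - x))
    (hq : ∀ γ : ℝ, f (x + γ • (y - x)) ≥
      f x + γ * ⟪gradf, y - x⟫ + γ ^ 2 * μB / 2 * gauge (convexHull ℝ B) (y - x) ^ 2) :
    f y ≥ f x - (sSup ((fun s => ⟪gradf, s⟫) '' B)) ^ 2 / (2 * μB) := by
  set K := convexHull ℝ B with hK
  set D := sSup ((fun s => ⟪gradf, s⟫) '' B) with hD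
  set z := y - x with hz
  set g := gauge K z with hg
  have hbdd : BddAbove ((fun s => ⟪gradf, s⟫) '' B) :=
    (hBc.image ((innerSL ℝ gradf).continuous)).bddAbove
  obtain ⟨s₀, hs₀⟩ := hB
  have hD0 : 0 ≤ D := by
    have h1 : ⟪gradf, s₀⟫ ≤ D := le_csSup hbdd ⟨s₀, hs₀, rfl⟩
    have h2 : ⟪gradf, -s₀⟫ ≤ D := le_csSup hbdd ⟨-s₀, hsym s₀ hs₀, rfl⟩
    rw [inner_neg_right] at h2; linarith
  have hKb : ∀ k ∈ K, ⟪gradf, k⟫ ≤ D := by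
    intro k hk
    exact convexHull_min (fun s hs => le_csSup hbdd ⟨s, hs, rfl⟩)
      (convex_halfSpace_le
        ⟨fun a b => inner_add_right _ _ _, fun c a => real_inner_smul_right _ _ c⟩ D) hk
  have key : ∀ w : H, 0 < gauge K w → ⟪gradf, w⟫ ≤ D * gauge K w := by
    intro w hw
    set S : Set ℝ := { r : ℝ | 0 < r ∧ w ∈ r • K } with hS
    have hgw : gauge K w = sInf S := rfl
    have hSne : S.Nonempty := by
      by_contra h
      rw [Set.not_nonempty_iff_eq_empty] at h
      rw [hgw, h, Real.sInf_empty] at hw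
      exact lt_irrefl 0 hw
    have hub : ∀ r ∈ S, ⟪gradf, w⟫ ≤ r * D := by
      rintro r ⟨hr, k, hk, rfl⟩
      rw [real_inner_smul_right]
      exact mul_le_mul_of_nonneg_left (hKb k hk) hr.le
    rcases eq_or_lt_of_le hD0 with hDeq | hDpos
    · obtain ⟨r, hr⟩ := hSne
      have := hub r hr
      rw [← hDeq] at this ⊢
      simpa using this
    · rw [mul_comm, ← div_le_iff₀ hDpos, hgw]
      refine le_csInf hSne fun r hr => ?_
      rw [div_le_iff₀ hDpos]
      exact hub r hr
    -- symmetry of K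
  have hsymK : ∀ k ∈ K, -k ∈ K := by
    intro k hk
    have : -k ∈ -K := Set.neg_mem_neg.2 hk
    rw [hK, ← convexHull_neg] at this
    exact convexHull_mono (fun s hs => by
      rw [Set.mem_neg] at hs; simpa using hsym _ hs) this
  have hgneg : gauge K (-z) = g := gauge_neg hsymK z
  have hdual : -(D * g) ≤ ⟪gradf, z⟫ := by
    have := key (-z) (by rw [hgneg]; exact hgauge)
    rw [hgneg, inner_neg_right] at this
    linarith
  have h1 := hq 1
  rw [one_smul] at h1
  have hy : x + z = y := by rw [hz]; abel
  rw [hy] at h1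
  have h2μ : (0:ℝ) < 2 * μB := by linarith
  have hdc : D ^ 2 / (2 * μB) * (2 * μB) = D ^ 2 := div_mul_cancel₀ _ (ne_of_gt h2μ)
  nlinarith [sq_nonneg (μB * g - D), mul_pos hμ (mul_pos hgauge hgauge)]
end

section
/- Let H be a real inner product space, A ⊆ H a nonempty bounded set, B := A ∪ (−A), and f : H → ℝ differentiable at x* ∈ H. If the Matching Pursuit gap vanishes at x*, i.e. sup_{s ∈ B} ⟨∇f(x*), s⟩ = 0, then ⟨∇f(x*), x − x*⟩ = 0 for every x ∈ H with x − x* in the linear span of A; in particular x* is a stationary point of f over the linear span of A. -/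
open scoped RealInnerProductSpace

-- Boundedness keeps `sSup` away from its junk value `0` on sets unbounded above.
theorem le_sSup_inner_image {H : Type*} [NormedAddCommGroup H] [InnerProductSpace ℝ H]
    {S : Set H} (hS : Bornology.IsBounded S) (v : H) {s : H} (hs : s ∈ S) :
    ⟪v, s⟫ ≤ sSup ((fun s => ⟪v, s⟫) '' S) :=
  le_csSup ((innerSL ℝ v).lipschitz.isBounded_image hS).bddAbove (Set.mem_image_of_mem _ hs)

theorem span_le_ker_of_nonpos_on_union_neg {R M : Type*} [Ring R] [PartialOrder R]
    [IsOrderedAddMonoid R] [AddCommGroup M] [Module R M] (φ : M →ₗ[R] R) {A : Set M}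
    (hφ : ∀ s ∈ A ∪ -A, φ s ≤ 0) : Submodule.span R A ≤ LinearMap.ker φ := by
  refine Submodule.span_le.mpr fun s hs => ?_
  have hneg : φ (-s) ≤ 0 := hφ (-s) (Or.inr (by simpa using hs))
  rw [map_neg, neg_nonpos] at hneg
  exact le_antisymm (hφ s (Or.inl hs)) hneg

theorem stmt_19_general {H : Type*} [NormedAddCommGroup H] [InnerProductSpace ℝ H]
    (A : Set H) (hAb : Bornology.IsBounded A)
    (xstar gradf : H)
    (hgap : sSup ((fun s => ⟪gradf, s⟫) '' (A ∪ -A)) = 0) :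
    ∀ x : H, x - xstar ∈ Submodule.span ℝ A → ⟪gradf, x - xstar⟫ = 0 := by
  have hnonpos : ∀ s ∈ A ∪ -A, (innerSL ℝ gradf).toLinearMap s ≤ 0 := fun s hs =>
    hgap ▸ le_sSup_inner_image (hAb.union hAb.neg) gradf hs
  exact fun x hx => span_le_ker_of_nonpos_on_union_neg _ hnonpos hx

/-- If the Matching Pursuit gap `sup_{s ∈ B} ⟨∇f(x*), s⟩` vanishes at `x*`, where
`B = A ∪ (−A)`, then `⟨∇f(x*), x − x*⟩ = 0` for every `x` with `x − x*` in the linear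
span of `A`; i.e. `x*` is stationary for `f` over the linear span of `A`. -/
theorem stmt_19 {H : Type*} [NormedAddCommGroup H] [InnerProductSpace ℝ H]
    (A : Set H) (hA : A.Nonempty) (hAb : Bornology.IsBounded A)
    (f : H → ℝ) (xstar gradf : H) (hgrad : HasFDerivAt f ((innerSL ℝ) gradf) xstar)
    (hgap : sSup ((fun s => ⟪gradf, s⟫) '' (A ∪ -A)) = 0) :
    ∀ x : H, x - xstar ∈ Submodule.span ℝ A → ⟪gradf, x - xstar⟫ = 0 :=
  stmt_19_general A hAb xstar gradf hgap
end
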